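/- Let Ā, Ã ∈ ℝ^{n×n} be such that both Ā and Ā + Ã are Hurwitz, let c > 0, and let M ∈ ℝ^{n×n} be symmetric with M ⪰ c·I_n. Let P̄ and P be the symmetric matrices satisfying ĀᵀP̄ + P̄Ā + M = 0 and (Ā + Ã)ᵀP + P(Ā + Ã) + M = 0, respectively. Then ‖P̄ − P‖ ≤ (2/c)·‖Ã‖·‖P‖·‖P̄‖. -/

import Mathlib

open Matrix NormedSpace Filter Topology

/-- A square real matrix is Hurwitz if every eigenvalue of it, viewed as a complex
matrix, has negative real part. -/
def IsHurwitz {n : ℕ} (A : Matrix (Fin n) (Fin n) ℝ) : Prop :=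
  ∀ μ ∈ spectrum ℂ (A.map (Complex.ofReal)), μ.re < 0

/-- The spectral (ℓ² operator) norm of a real matrix. -/
noncomputable def matrixSpectralNorm {m n : ℕ} (A : Matrix (Fin m) (Fin n) ℝ) : ℝ :=
  ‖LinearMap.toContinuousLinearMap (Matrix.toEuclideanLin A)‖

attribute [local instance] Matrix.linftyOpSemiNormedRing Matrix.linftyOpNormedRing
  Matrix.linftyOpNormedAlgebra

section Decay

private lemma aux_tendsto (j : ℕ) {b : ℝ} (hb : b < 0) :
    Tendsto (fun k : ℕ => (k : ℝ) ^ j * Real.exp (b * k)) atTop (𝓝 0) := by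
  have h0 : Tendsto (fun x : ℝ => x ^ j * Real.exp (-x)) atTop (𝓝 0) :=
    Real.tendsto_pow_mul_exp_neg_atTop_nhds_zero j
  have hφ : Tendsto (fun x : ℝ => (-b) * x) atTop atTop :=
    Tendsto.const_mul_atTop (by linarith) tendsto_id
  have h1 : Tendsto (fun x : ℝ => ((-b) * x) ^ j * Real.exp (b * x)) atTop (𝓝 0) := by
    have := h0.comp hφ
    simpa [Function.comp_def, neg_mul] using this
  have h2 : Tendsto (fun x : ℝ => ((-b) ^ j)⁻¹ * (((-b) * x) ^ j * Real.exp (b * x)))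
      atTop (𝓝 0) := by simpa using h1.const_mul ((-b) ^ j)⁻¹
  have h3 : Tendsto (fun x : ℝ => x ^ j * Real.exp (b * x)) atTop (𝓝 0) := by
    refine h2.congr fun x => ?_
    rw [mul_pow, ← mul_assoc, ← mul_assoc, inv_mul_cancel₀ (pow_ne_zero j (by linarith))]
    ring
  exact h3.comp tendsto_natCast_atTop_atTop

private lemma mulVec_exp_eq {n : ℕ} (N : Matrix (Fin n) (Fin n) ℂ) (t : ℂ) (v : Fin n → ℂ)
    (d : ℕ) (hv : N ^ d *ᵥ v = 0) :
    exp (t • N) *ᵥ v =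
      ∑ j ∈ Finset.range d, ((j.factorial : ℂ)⁻¹ * t ^ j) • (N ^ j *ᵥ v) := by
  classical
  let L : Matrix (Fin n) (Fin n) ℂ →ₗ[ℂ] (Fin n → ℂ) :=
    { toFun := fun M => M *ᵥ v
      map_add' := fun M₁ M₂ => Matrix.add_mulVec _ _ _
      map_smul' := fun c M => (Matrix.smul_mulVec c M v) }
  let Lc : Matrix (Fin n) (Fin n) ℂ →L[ℂ] (Fin n → ℂ) := LinearMap.toContinuousLinearMap L
  have hsum : Summable fun j : ℕ => ((j.factorial : ℂ)⁻¹) • (t • N) ^ j :=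
    expSeries_summable' (𝕂 := ℂ) (t • N)
  have h1 : exp (t • N) *ᵥ v = ∑' j : ℕ, ((j.factorial : ℂ)⁻¹) • ((t • N) ^ j *ᵥ v) := by
    have : exp (t • N) *ᵥ v = Lc (exp (t • N)) := rfl
    rw [this, exp_eq_tsum (𝕂 := ℂ), Lc.map_tsum hsum]
    simp [Lc, L, Matrix.smul_mulVec]
  rw [h1, tsum_eq_sum (s := Finset.range d)]
  · exact Finset.sum_congr rfl fun j hj => by
      rw [smul_pow, Matrix.smul_mulVec, smul_smul]
  · intro j hj
    rw [Finset.mem_range, not_lt] at hj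
    have hz : N ^ j *ᵥ v = 0 := by
      have : N ^ j = N ^ (j - d) * N ^ d := by rw [← pow_add]; congr 1; omega
      rw [this, ← Matrix.mulVec_mulVec, hv, Matrix.mulVec_zero]
    rw [smul_pow, Matrix.smul_mulVec, hz, smul_zero, smul_zero]

private lemma exp_split {n : ℕ} (B : Matrix (Fin n) (Fin n) ℂ) (μ : ℂ) (t : ℝ) :
    exp ((t : ℂ) • B) =
      Complex.exp ((t : ℂ) * μ) • exp ((t : ℂ) • (B - μ • 1)) := by
  have hsplit : (t : ℂ) • B = ((t : ℂ) * μ) • (1 : Matrix (Fin n) (Fin n) ℂ)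
      + (t : ℂ) • (B - μ • 1) := by
    rw [smul_sub, smul_smul]; abel
  have hcomm : Commute (((t : ℂ) * μ) • (1 : Matrix (Fin n) (Fin n) ℂ))
      ((t : ℂ) • (B - μ • 1)) := ((Commute.one_left _).smul_left _).smul_right _
  rw [hsplit]; erw [exp_add_of_commute hcomm]
  have h1 : (((t : ℂ) * μ) • (1 : Matrix (Fin n) (Fin n) ℂ)) =
      algebraMap ℂ (Matrix (Fin n) (Fin n) ℂ) ((t : ℂ) * μ) := by
    rw [Algebra.algebraMap_eq_smul_one]
  rw [h1, ← algebraMap_exp_comm, Algebra.algebraMap_eq_smul_one, smul_mul_assoc, one_mul,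
    Complex.exp_eq_exp_ℂ]
  rfl

private lemma gen_eig_decay {n : ℕ} (B : Matrix (Fin n) (Fin n) ℂ) {μ : ℂ} (hμ : μ.re < 0)
    (v : Fin n → ℂ) (d : ℕ) (hv : (B - μ • 1) ^ d *ᵥ v = 0) :
    Tendsto (fun k : ℕ => exp ((k : ℂ) • B) *ᵥ v) atTop (𝓝 0) := by
  set N : Matrix (Fin n) (Fin n) ℂ := B - μ • 1 with hN
  have key : ∀ k : ℕ, exp ((k : ℂ) • B) *ᵥ v =
      Complex.exp ((k : ℂ) * μ) •
        ∑ j ∈ Finset.range d, ((j.factorial : ℂ)⁻¹ * (k : ℂ) ^ j) • (N ^ j *ᵥ v) := by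
    intro k
    have h1 := exp_split B μ (k : ℝ)
    push_cast at h1
    rw [h1, Matrix.smul_mulVec, mulVec_exp_eq N (k : ℂ) v d hv]
  have hbound : ∀ k : ℕ, ‖exp ((k : ℂ) • B) *ᵥ v‖ ≤
      ∑ j ∈ Finset.range d, ‖N ^ j *ᵥ v‖ * ((k : ℝ) ^ j * Real.exp (μ.re * k)) := by
    intro k
    rw [key k, norm_smul]
    have h2 : ‖Complex.exp ((k : ℂ) * μ)‖ = Real.exp (μ.re * k) := by
      rw [Complex.norm_exp]
      congr 1
      simp [mul_comm]
    rw [h2]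
    calc Real.exp (μ.re * k) * ‖∑ j ∈ Finset.range d,
          ((j.factorial : ℂ)⁻¹ * (k : ℂ) ^ j) • (N ^ j *ᵥ v)‖
        ≤ Real.exp (μ.re * k) * ∑ j ∈ Finset.range d, (k : ℝ) ^ j * ‖N ^ j *ᵥ v‖ := by
          refine mul_le_mul_of_nonneg_left ?_ (Real.exp_pos _).le
          refine (norm_sum_le _ _).trans (Finset.sum_le_sum fun j hj => ?_)
          rw [norm_smul]
          refine mul_le_mul_of_nonneg_right ?_ (norm_nonneg _)
          rw [norm_mul, norm_pow]
          have : ‖((j.factorial : ℂ))⁻¹‖ ≤ 1 := by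
            rw [norm_inv]
            refine inv_le_one_of_one_le₀ ?_
            simpa using Nat.succ_le_of_lt j.factorial_pos
          calc ‖((j.factorial : ℂ))⁻¹‖ * ‖(k : ℂ)‖ ^ j ≤ 1 * ‖(k : ℂ)‖ ^ j := by
                exact mul_le_mul_of_nonneg_right this (by positivity)
            _ = (k : ℝ) ^ j := by
                rw [one_mul]; congr 1; simp
      _ = ∑ j ∈ Finset.range d, ‖N ^ j *ᵥ v‖ * ((k : ℝ) ^ j * Real.exp (μ.re * k)) := by
          rw [Finset.mul_sum]; exact Finset.sum_congr rfl fun j _ => by ring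
  refine squeeze_zero_norm hbound ?_
  have : Tendsto (fun k : ℕ => ∑ j ∈ Finset.range d,
      ‖N ^ j *ᵥ v‖ * ((k : ℝ) ^ j * Real.exp (μ.re * k))) atTop (𝓝 0) := by
    have := tendsto_finset_sum (Finset.range d)
      (fun j _ => ((aux_tendsto j hμ).const_mul ‖N ^ j *ᵥ v‖))
    simpa using this
  exact this

private lemma complex_decay {n : ℕ} (B : Matrix (Fin n) (Fin n) ℂ)
    (hB : ∀ μ ∈ spectrum ℂ B, μ.re < 0) (v : Fin n → ℂ) :
    Tendsto (fun k : ℕ => exp ((k : ℂ) • B) *ᵥ v) atTop (𝓝 0) := by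
  classical
  let S : Submodule ℂ (Fin n → ℂ) :=
    { carrier := {w | Tendsto (fun k : ℕ => exp ((k : ℂ) • B) *ᵥ w) atTop (𝓝 0)}
      add_mem' := fun {a b} ha hb => by
        have := Tendsto.add ha hb
        simpa [Matrix.mulVec_add] using this
      zero_mem' := by simp [Matrix.mulVec_zero, tendsto_const_nhds]
      smul_mem' := fun c {w} hw => by
        have := hw.const_smul c
        simpa [Matrix.mulVec_smul] using this }
  suffices h : (⊤ : Submodule ℂ (Fin n → ℂ)) ≤ S from h trivial
  set g : Module.End ℂ (Fin n → ℂ) := Matrix.toLinAlgEquiv' B with hg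
  rw [← Module.End.iSup_maxGenEigenspace_eq_top g]
  refine iSup_le fun μ => fun w hw => ?_
  by_cases hw0 : w = 0
  · simpa [hw0] using S.zero_mem
  obtain ⟨d, hd⟩ := (Module.End.mem_maxGenEigenspace g μ w).mp hw
  have hμspec : μ ∈ spectrum ℂ B := by
    have hgen : g.HasGenEigenvalue μ d := by
      rw [Module.End.hasGenEigenvalue_iff, Submodule.ne_bot_iff]
      refine ⟨w, ?_, hw0⟩
      rw [Module.End.genEigenspace_nat]
      exact hd
    have := Module.End.hasEigenvalue_of_hasGenEigenvalue hgen
    have h2 := Module.End.hasEigenvalue_iff_mem_spectrum.mp this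
    rwa [hg, AlgEquiv.spectrum_eq] at h2
  have hμ := hB μ hμspec
  have hdmat : (B - μ • 1) ^ d *ᵥ w = 0 := by
    have h0 : ((g - μ • 1) ^ d) w = 0 := hd
    have he : (g - μ • 1) ^ d = Matrix.toLinAlgEquiv' ((B - μ • 1) ^ d) := by
      rw [map_pow, map_sub, _root_.map_smul, _root_.map_one]
    rw [he, Matrix.toLinAlgEquiv'_apply] at h0
    exact h0
  exact gen_eig_decay B hμ w d hdmat

private lemma exp_map_ofReal {n : ℕ} (M : Matrix (Fin n) (Fin n) ℝ) :
    (exp M).map Complex.ofReal = exp (M.map Complex.ofReal) := by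
  have hf : Continuous ((algebraMap ℝ ℂ).mapMatrix :
      Matrix (Fin n) (Fin n) ℝ →+* Matrix (Fin n) (Fin n) ℂ) := by
    have he : ⇑((algebraMap ℝ ℂ).mapMatrix :
        Matrix (Fin n) (Fin n) ℝ →+* Matrix (Fin n) (Fin n) ℂ) =
        fun M : Matrix (Fin n) (Fin n) ℝ => M.map (algebraMap ℝ ℂ) := rfl
    rw [he]
    exact Continuous.matrix_map continuous_id (continuous_algebraMap ℝ ℂ)
  have h := map_exp ((algebraMap ℝ ℂ).mapMatrix :
      Matrix (Fin n) (Fin n) ℝ →+* Matrix (Fin n) (Fin n) ℂ) hf M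
  have h2 : (exp : Matrix (Fin n) (Fin n) ℂ → _) = exp := rfl
  simp only [RingHom.mapMatrix_apply] at h
  exact h

private lemma real_decay {n : ℕ} (A : Matrix (Fin n) (Fin n) ℝ) (hA : IsHurwitz A)
    (x : Fin n → ℝ) :
    Tendsto (fun k : ℕ => exp ((k : ℝ) • A) *ᵥ x) atTop (𝓝 0) := by
  set Ac := A.map Complex.ofReal with hAc
  have hc := complex_decay Ac hA (fun i => (x i : ℂ))
  rw [tendsto_pi_nhds]
  intro i
  rw [tendsto_pi_nhds] at hc
  have hci := (Complex.continuous_re.tendsto 0).comp (hc i)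
  have key : ∀ k : ℕ, (exp ((k : ℝ) • A) *ᵥ x) i =
      ((exp ((k : ℂ) • Ac) *ᵥ (fun i => (x i : ℂ))) i).re := by
    intro k
    have hmap : ((exp ((k : ℝ) • A)).map Complex.ofReal) = exp ((k : ℂ) • Ac) := by
      have hsm : ((k : ℝ) • A).map Complex.ofReal = (k : ℂ) • Ac := by
        ext i j
        simp [hAc, Matrix.map_apply, Complex.ofReal_mul]
      rw [exp_map_ofReal, hsm]
    rw [← hmap]
    simp only [Matrix.mulVec, Matrix.map_apply, dotProduct]
    simp
  have : (fun k : ℕ => (exp ((k : ℝ) • A) *ᵥ x) i) =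
      fun k : ℕ => ((exp ((k : ℂ) • Ac) *ᵥ (fun i => (x i : ℂ))) i).re := by
    funext k; exact key k
  rw [this]
  exact hci

end Decay

/-- Key Lyapunov lemma: if `A` is Hurwitz and `AᵀX + XA ⪯ 0` with `X` symmetric,
then `X ⪰ 0`. -/
private lemma psd_of_lyap {n : ℕ} (A X : Matrix (Fin n) (Fin n) ℝ) (hA : IsHurwitz A)
    (hX : X.IsHermitian) (h : (-(Aᵀ * X + X * A)).PosSemidef) : X.PosSemidef := by
  classical
  refine Matrix.PosSemidef.of_dotProduct_mulVec_nonneg hX fun x => ?_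
  set y : ℝ → (Fin n → ℝ) := fun t => exp (t • A) *ᵥ x with hy
  set f : ℝ → ℝ := fun t => y t ⬝ᵥ (X *ᵥ y t) with hf
  let Lx : Matrix (Fin n) (Fin n) ℝ →ₗ[ℝ] (Fin n → ℝ) :=
    { toFun := fun M => M *ᵥ x
      map_add' := fun M₁ M₂ => Matrix.add_mulVec _ _ _
      map_smul' := fun c M => Matrix.smul_mulVec c M x }
  let Lc : Matrix (Fin n) (Fin n) ℝ →L[ℝ] (Fin n → ℝ) := LinearMap.toContinuousLinearMap Lx
  have hyd : ∀ t : ℝ, HasDerivAt y (A *ᵥ y t) t := by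
    intro t
    have he : HasDerivAt (fun u : ℝ => exp (u • A)) (A * exp (t • A)) t :=
      hasDerivAt_exp_smul_const' A t
    have h3 := Lc.hasFDerivAt.comp_hasDerivAt t he
    have h2 : Lc (A * exp (t • A)) = A *ᵥ y t := by
      show (A * exp (t • A)) *ᵥ x = A *ᵥ y t
      rw [← Matrix.mulVec_mulVec]
    exact h2 ▸ h3
  have hXyd : ∀ t : ℝ, HasDerivAt (fun t => X *ᵥ y t) (X *ᵥ (A *ᵥ y t)) t := by
    intro t
    let LX : (Fin n → ℝ) →ₗ[ℝ] (Fin n → ℝ) :=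
      { toFun := fun w => X *ᵥ w
        map_add' := fun a b => Matrix.mulVec_add _ _ _
        map_smul' := fun c a => by simp [Matrix.mulVec_smul] }
    exact (LinearMap.toContinuousLinearMap LX).hasFDerivAt.comp_hasDerivAt t (hyd t)
  have hfd : ∀ t : ℝ, HasDerivAt f
      ((A *ᵥ y t) ⬝ᵥ (X *ᵥ y t) + y t ⬝ᵥ (X *ᵥ (A *ᵥ y t))) t := by
    intro t
    have h1 : ∀ i, HasDerivAt (fun t => y t i) ((A *ᵥ y t) i) t :=
      fun i => hasDerivAt_pi.mp (hyd t) i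
    have h2 : ∀ i, HasDerivAt (fun t => (X *ᵥ y t) i) ((X *ᵥ (A *ᵥ y t)) i) t :=
      fun i => hasDerivAt_pi.mp (hXyd t) i
    have h3 : HasDerivAt (fun t => ∑ i, y t i * (X *ᵥ y t) i)
        (∑ i, ((A *ᵥ y t) i * (X *ᵥ y t) i + y t i * (X *ᵥ (A *ᵥ y t)) i)) t :=
      HasDerivAt.fun_sum fun i _ => (h1 i).mul (h2 i)
    have heq : (fun t => ∑ i, y t i * (X *ᵥ y t) i) = f := by
      funext t; simp [hf, dotProduct]
    have heq2 : (∑ i, ((A *ᵥ y t) i * (X *ᵥ y t) i + y t i * (X *ᵥ (A *ᵥ y t)) i))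
        = (A *ᵥ y t) ⬝ᵥ (X *ᵥ y t) + y t ⬝ᵥ (X *ᵥ (A *ᵥ y t)) := by
      rw [Finset.sum_add_distrib]; rfl
    rw [← heq, ← heq2]
    exact h3
  have hderiv_nonpos : ∀ t : ℝ,
      (A *ᵥ y t) ⬝ᵥ (X *ᵥ y t) + y t ⬝ᵥ (X *ᵥ (A *ᵥ y t)) ≤ 0 := by
    intro t
    have hps := h.dotProduct_mulVec_nonneg (y t)
    have e1 : (A *ᵥ y t) ⬝ᵥ (X *ᵥ y t) = y t ⬝ᵥ ((Aᵀ * X) *ᵥ y t) := by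
      rw [← Matrix.mulVec_mulVec, Matrix.dotProduct_mulVec (y t) Aᵀ _,
        Matrix.vecMul_transpose]
    have e2 : y t ⬝ᵥ (X *ᵥ (A *ᵥ y t)) = y t ⬝ᵥ ((X * A) *ᵥ y t) := by
      rw [← Matrix.mulVec_mulVec]
    have hrw : star (y t) ⬝ᵥ (-(Aᵀ * X + X * A) *ᵥ y t)
        = -((A *ᵥ y t) ⬝ᵥ (X *ᵥ y t) + y t ⬝ᵥ (X *ᵥ (A *ᵥ y t))) := by
      rw [e1, e2, star_trivial, Matrix.neg_mulVec, dotProduct_neg, Matrix.add_mulVec,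
        dotProduct_add]
    rw [hrw] at hps
    linarith
  have hant : Antitone f := by
    refine antitone_of_deriv_nonpos (fun t => (hfd t).differentiableAt) fun t => ?_
    rw [(hfd t).deriv]
    exact hderiv_nonpos t
  have hf0 : f 0 = x ⬝ᵥ (X *ᵥ x) := by
    have : y 0 = x := by
      rw [hy]
      simp [Matrix.one_mulVec]
    simp [hf, this]
  have hφ : Continuous (fun z : Fin n → ℝ => z ⬝ᵥ (X *ᵥ z)) := by
    have : (fun z : Fin n → ℝ => z ⬝ᵥ (X *ᵥ z))
        = fun z => ∑ i, z i * ∑ j, X i j * z j := by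
      funext z; rfl
    rw [this]
    exact continuous_finset_sum _ fun i _ => (continuous_apply i).mul
      (continuous_finset_sum _ fun j _ => continuous_const.mul (continuous_apply j))
  have htend : Tendsto (fun k : ℕ => f (k : ℝ)) atTop (𝓝 0) := by
    have := (hφ.tendsto 0).comp (real_decay A hA x)
    simpa [Function.comp_def, hf, hy] using this
  have h0le : 0 ≤ f 0 :=
    le_of_tendsto htend (Filter.Eventually.of_forall fun k => hant (Nat.cast_nonneg k))
  rwa [star_trivial, ← hf0]

section SpecNorm
variable {n : ℕ}

private lemma inner_eE (x y : Fin n → ℝ) :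
    (inner ℝ ((WithLp.equiv 2 (Fin n → ℝ)).symm x) ((WithLp.equiv 2 (Fin n → ℝ)).symm y) : ℝ)
      = x ⬝ᵥ y := by
  simp [PiLp.inner_apply, RCLike.inner_apply, dotProduct, mul_comm]

private lemma norm_eE_sq (x : Fin n → ℝ) :
    ‖(WithLp.equiv 2 (Fin n → ℝ)).symm x‖ ^ 2 = x ⬝ᵥ x := by
  rw [← real_inner_self_eq_norm_sq, inner_eE]

private lemma toCLM_apply (S : Matrix (Fin n) (Fin n) ℝ) (x : Fin n → ℝ) :
    LinearMap.toContinuousLinearMap (Matrix.toEuclideanLin S)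
        ((WithLp.equiv 2 (Fin n → ℝ)).symm x)
      = (WithLp.equiv 2 (Fin n → ℝ)).symm (S *ᵥ x) := by
  rw [LinearMap.coe_toContinuousLinearMap']
  exact Matrix.toEuclideanLin_apply_piLp_toLp S x

private lemma norm_mulVec_le (S : Matrix (Fin n) (Fin n) ℝ) (x : Fin n → ℝ) :
    ‖(WithLp.equiv 2 (Fin n → ℝ)).symm (S *ᵥ x)‖
      ≤ matrixSpectralNorm S * ‖(WithLp.equiv 2 (Fin n → ℝ)).symm x‖ := by
  rw [← toCLM_apply]
  exact ContinuousLinearMap.le_opNorm _ _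

private lemma abs_dot_le (S : Matrix (Fin n) (Fin n) ℝ) (x : Fin n → ℝ) :
    |x ⬝ᵥ (S *ᵥ x)| ≤ matrixSpectralNorm S * (x ⬝ᵥ x) := by
  set xE := (WithLp.equiv 2 (Fin n → ℝ)).symm x with hxE
  set T := LinearMap.toContinuousLinearMap (Matrix.toEuclideanLin S) with hT
  have h1 : x ⬝ᵥ (S *ᵥ x) = (inner ℝ xE (T xE) : ℝ) := by
    rw [hT, toCLM_apply, inner_eE]
  rw [h1]
  calc |(inner ℝ xE (T xE) : ℝ)| ≤ ‖xE‖ * ‖T xE‖ := abs_real_inner_le_norm _ _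
    _ ≤ ‖xE‖ * (‖T‖ * ‖xE‖) :=
        mul_le_mul_of_nonneg_left (T.le_opNorm xE) (norm_nonneg _)
    _ = ‖T‖ * ‖xE‖ ^ 2 := by ring
    _ = matrixSpectralNorm S * (x ⬝ᵥ x) := by rw [norm_eE_sq]; rfl

private lemma matrixSpectralNorm_le_of_quadform (S : Matrix (Fin n) (Fin n) ℝ) (hS : Sᵀ = S)
    {K : ℝ} (hK : 0 ≤ K) (h : ∀ x : Fin n → ℝ, |x ⬝ᵥ (S *ᵥ x)| ≤ K * (x ⬝ᵥ x)) :
    matrixSpectralNorm S ≤ K := by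
  have hsymm : ∀ a b : Fin n → ℝ, b ⬝ᵥ (S *ᵥ a) = a ⬝ᵥ (S *ᵥ b) := by
    intro a b
    rw [dotProduct_comm, Matrix.dotProduct_mulVec, ← Matrix.vecMul_transpose, hS,
      ← Matrix.dotProduct_mulVec, dotProduct_comm]
  have key : ∀ a b : Fin n → ℝ, a ⬝ᵥ (S *ᵥ b) ≤ (K / 2) * (a ⬝ᵥ a + b ⬝ᵥ b) := by
    intro a b
    have e1 : (a + b) ⬝ᵥ (S *ᵥ (a + b))
        = a ⬝ᵥ (S *ᵥ a) + 2 * (a ⬝ᵥ (S *ᵥ b)) + b ⬝ᵥ (S *ᵥ b) := by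
      rw [Matrix.mulVec_add, dotProduct_add, add_dotProduct,
        add_dotProduct, hsymm a b]
      ring
    have e2 : (a - b) ⬝ᵥ (S *ᵥ (a - b))
        = a ⬝ᵥ (S *ᵥ a) - 2 * (a ⬝ᵥ (S *ᵥ b)) + b ⬝ᵥ (S *ᵥ b) := by
      rw [Matrix.mulVec_sub, dotProduct_sub, sub_dotProduct,
        sub_dotProduct, hsymm a b]
      ring
    have p1 : (a + b) ⬝ᵥ (a + b) = a ⬝ᵥ a + 2 * (a ⬝ᵥ b) + b ⬝ᵥ b := by
      rw [dotProduct_add, add_dotProduct, add_dotProduct,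
        dotProduct_comm b a]
      ring
    have p2 : (a - b) ⬝ᵥ (a - b) = a ⬝ᵥ a - 2 * (a ⬝ᵥ b) + b ⬝ᵥ b := by
      rw [dotProduct_sub, sub_dotProduct, sub_dotProduct,
        dotProduct_comm b a]
      ring
    have h1 := (abs_le.mp (h (a + b))).2
    have h2 := (abs_le.mp (h (a - b))).1
    rw [e1, p1] at h1
    rw [e2, p2] at h2
    nlinarith [h (a + b), h (a - b)]
  refine ContinuousLinearMap.opNorm_le_bound _ hK fun v => ?_
  set y : Fin n → ℝ := WithLp.equiv 2 (Fin n → ℝ) v with hy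
  have hv : v = (WithLp.equiv 2 (Fin n → ℝ)).symm y := rfl
  set w : Fin n → ℝ := S *ᵥ y with hw
  have hTv : LinearMap.toContinuousLinearMap (Matrix.toEuclideanLin S) v
      = (WithLp.equiv 2 (Fin n → ℝ)).symm w := by rw [hv, toCLM_apply]
  rw [hTv]
  set nw := ‖(WithLp.equiv 2 (Fin n → ℝ)).symm w‖ with hnw
  set nv := ‖v‖ with hnv
  have hnw0 : 0 ≤ nw := norm_nonneg _
  have hnv0 : 0 ≤ nv := norm_nonneg _
  by_cases hz : nw = 0
  · rw [hz]; positivity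
  have hwpos : 0 < nw := lt_of_le_of_ne hnw0 (Ne.symm hz)
  have hkey := key ((nv / nw) • w) y
  have hww : w ⬝ᵥ w = nw ^ 2 := by rw [hnw, norm_eE_sq]
  have hyy : y ⬝ᵥ y = nv ^ 2 := by rw [hnv, hv, norm_eE_sq]
  have lhs_eq : ((nv / nw) • w) ⬝ᵥ (S *ᵥ y) = (nv / nw) * nw ^ 2 := by
    rw [smul_dotProduct, ← hw, hww]
    rfl
  have rhs_eq : ((nv / nw) • w) ⬝ᵥ ((nv / nw) • w) = (nv / nw) ^ 2 * nw ^ 2 := by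
    rw [smul_dotProduct, dotProduct_smul, hww]
    simp [smul_eq_mul]; ring
  rw [lhs_eq, rhs_eq, hyy] at hkey
  have hmain : nv * nw ≤ K * nv ^ 2 := by
    have hne : nw ≠ 0 := hz
    have e3 : nv / nw * nw ^ 2 = nv * nw := by field_simp
    have e4 : (nv / nw) ^ 2 * nw ^ 2 = nv ^ 2 := by field_simp
    rw [e3, e4] at hkey
    linarith
  by_cases hv0 : nv = 0
  · have hvz : v = 0 := norm_eq_zero.mp hv0
    rw [hvz] at hv
    have hy0 : y = 0 := by
      have := congrArg (WithLp.equiv 2 (Fin n → ℝ)) hv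
      simpa using this.symm
    rw [hy0] at hw
    simp [Matrix.mulVec_zero] at hw
    rw [hnw, hw] at hz
    simp at hz
  · have hvpos : 0 < nv := lt_of_le_of_ne hnv0 (Ne.symm hv0)
    nlinarith [hmain]

end SpecNorm

/-- Lyapunov-solution perturbation bound: if `Ā` and `Ā + Ã` are
Hurwitz, `M ⪰ c·I` symmetric with `c > 0`, and symmetric `P̄, P` solve
`ĀᵀP̄ + P̄Ā + M = 0` and `(Ā+Ã)ᵀP + P(Ā+Ã) + M = 0`,
then `‖P̄ − P‖ ≤ (2/c)‖Ã‖‖P‖‖P̄‖`. -/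
theorem lyapunov_perturbation_bound {n : ℕ}
    (Abar Atil M Pbar P : Matrix (Fin n) (Fin n) ℝ)
    (hAbar : IsHurwitz Abar) (hApert : IsHurwitz (Abar + Atil))
    (c : ℝ) (hc : 0 < c) (hM : M.IsHermitian)
    (hMc : (M - c • (1 : Matrix (Fin n) (Fin n) ℝ)).PosSemidef)
    (hPbar : Pbar.IsHermitian) (hP : P.IsHermitian)
    (hLyapBar : Abarᵀ * Pbar + Pbar * Abar + M = 0)
    (hLyap : (Abar + Atil)ᵀ * P + P * (Abar + Atil) + M = 0) :
    matrixSpectralNorm (Pbar - P) ≤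
      (2 / c) * matrixSpectralNorm Atil * matrixSpectralNorm P * matrixSpectralNorm Pbar := by
  classical
  -- transpose facts
  have tM : Mᵀ = M := by rw [← Matrix.conjTranspose_eq_transpose_of_trivial]; exact hM
  have tPbar : Pbarᵀ = Pbar := by
    rw [← Matrix.conjTranspose_eq_transpose_of_trivial]; exact hPbar
  have tP : Pᵀ = P := by rw [← Matrix.conjTranspose_eq_transpose_of_trivial]; exact hP
  -- abbreviations
  set Δ : Matrix (Fin n) (Fin n) ℝ := Pbar - P with hΔ
  set R : Matrix (Fin n) (Fin n) ℝ := Atilᵀ * P + P * Atil with hR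
  set r : ℝ := 2 * matrixSpectralNorm Atil * matrixSpectralNorm P with hr
  have hr0 : 0 ≤ r := by
    rw [hr]
    have := norm_nonneg (LinearMap.toContinuousLinearMap (Matrix.toEuclideanLin Atil))
    have := norm_nonneg (LinearMap.toContinuousLinearMap (Matrix.toEuclideanLin P))
    positivity
  have hrc0 : 0 ≤ r / c := div_nonneg hr0 hc.le
  have tΔ : Δᵀ = Δ := by rw [hΔ, Matrix.transpose_sub, tPbar, tP]
  have tR : Rᵀ = R := by
    rw [hR, Matrix.transpose_add, Matrix.transpose_mul, Matrix.transpose_mul,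
      Matrix.transpose_transpose, tP]
    abel
  -- Lyapunov equation for Δ
  have g1 : Abarᵀ * Pbar + Pbar * Abar = -M := eq_neg_of_add_eq_zero_left hLyapBar
  have h2' : (Abarᵀ * P + P * Abar) + (Atilᵀ * P + P * Atil) + M = 0 := by
    rw [← hLyap, Matrix.transpose_add, Matrix.add_mul, Matrix.mul_add]
    abel
  have g2 : Abarᵀ * P + P * Abar = -M - (Atilᵀ * P + P * Atil) :=
    eq_sub_of_add_eq (eq_neg_of_add_eq_zero_left h2')
  have keyΔ : Abarᵀ * Δ + Δ * Abar = R := by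
    rw [hΔ, hR, Matrix.mul_sub, Matrix.sub_mul]
    have e : Abarᵀ * Pbar - Abarᵀ * P + (Pbar * Abar - P * Abar)
        = (Abarᵀ * Pbar + Pbar * Abar) - (Abarᵀ * P + P * Abar) := by abel
    rw [e, g1, g2]
    abel
  -- quadratic form bounds
  have hMx : ∀ x : Fin n → ℝ, c * (x ⬝ᵥ x) ≤ x ⬝ᵥ (M *ᵥ x) := by
    intro x
    have := hMc.dotProduct_mulVec_nonneg x
    rw [star_trivial, Matrix.sub_mulVec, dotProduct_sub,
      Matrix.smul_mulVec, Matrix.one_mulVec, dotProduct_smul,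
      smul_eq_mul] at this
    linarith
  have hRx : ∀ x : Fin n → ℝ, |x ⬝ᵥ (R *ᵥ x)| ≤ r * (x ⬝ᵥ x) := by
    intro x
    have e1 : x ⬝ᵥ (R *ᵥ x) = (Atil *ᵥ x) ⬝ᵥ (P *ᵥ x) + x ⬝ᵥ (P *ᵥ (Atil *ᵥ x)) := by
      rw [hR, Matrix.add_mulVec, dotProduct_add, ← Matrix.mulVec_mulVec,
        ← Matrix.mulVec_mulVec, Matrix.dotProduct_mulVec x Atilᵀ _,
        Matrix.vecMul_transpose]
    have e2 : x ⬝ᵥ (P *ᵥ (Atil *ᵥ x)) = (Atil *ᵥ x) ⬝ᵥ (P *ᵥ x) := by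
      rw [dotProduct_comm, Matrix.dotProduct_mulVec, ← Matrix.vecMul_transpose, tP,
        ← Matrix.dotProduct_mulVec, dotProduct_comm]
    rw [e1, e2, ← two_mul]
    set a := Atil *ᵥ x with ha
    set b := P *ᵥ x with hb
    have hdot : |a ⬝ᵥ b| ≤ ‖(WithLp.equiv 2 (Fin n → ℝ)).symm a‖ *
        ‖(WithLp.equiv 2 (Fin n → ℝ)).symm b‖ := by
      rw [← inner_eE]
      exact abs_real_inner_le_norm _ _
    have hna : ‖(WithLp.equiv 2 (Fin n → ℝ)).symm a‖
        ≤ matrixSpectralNorm Atil * ‖(WithLp.equiv 2 (Fin n → ℝ)).symm x‖ := norm_mulVec_le _ _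
    have hnb : ‖(WithLp.equiv 2 (Fin n → ℝ)).symm b‖
        ≤ matrixSpectralNorm P * ‖(WithLp.equiv 2 (Fin n → ℝ)).symm x‖ := norm_mulVec_le _ _
    have hxx : ‖(WithLp.equiv 2 (Fin n → ℝ)).symm x‖ ^ 2 = x ⬝ᵥ x := norm_eE_sq x
    have hnx0 : (0 : ℝ) ≤ ‖(WithLp.equiv 2 (Fin n → ℝ)).symm x‖ := norm_nonneg _
    have hsA : (0 : ℝ) ≤ matrixSpectralNorm Atil := norm_nonneg _
    have hsP : (0 : ℝ) ≤ matrixSpectralNorm P := norm_nonneg _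
    rw [abs_mul, abs_two]
    calc 2 * |a ⬝ᵥ b| ≤ 2 * (‖(WithLp.equiv 2 (Fin n → ℝ)).symm a‖ *
          ‖(WithLp.equiv 2 (Fin n → ℝ)).symm b‖) := by linarith
      _ ≤ 2 * ((matrixSpectralNorm Atil * ‖(WithLp.equiv 2 (Fin n → ℝ)).symm x‖) *
          (matrixSpectralNorm P * ‖(WithLp.equiv 2 (Fin n → ℝ)).symm x‖)) := by
          have := mul_le_mul hna hnb (norm_nonneg _) (by positivity)
          linarith
      _ = r * ‖(WithLp.equiv 2 (Fin n → ℝ)).symm x‖ ^ 2 := by rw [hr]; ring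
      _ = r * (x ⬝ᵥ x) := by rw [hxx]
  -- the two PSD auxiliary matrices
  have herm_aux : ∀ (Y : Matrix (Fin n) (Fin n) ℝ), Yᵀ = Y → Y.IsHermitian := by
    intro Y hY
    show Yᴴ = Y
    rw [Matrix.conjTranspose_eq_transpose_of_trivial, hY]
  have psd_plus : ((r / c) • Pbar + Δ).PosSemidef := by
    have hYt : ((r / c) • Pbar + Δ)ᵀ = (r / c) • Pbar + Δ := by
      rw [Matrix.transpose_add, Matrix.transpose_smul, tPbar, tΔ]
    refine psd_of_lyap Abar _ hAbar (herm_aux _ hYt) ?_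
    have hL : -(Abarᵀ * ((r / c) • Pbar + Δ) + ((r / c) • Pbar + Δ) * Abar)
        = (r / c) • M - R := by
      rw [Matrix.mul_add, Matrix.add_mul, mul_smul_comm, smul_mul_assoc]
      have e : Abarᵀ * Pbar + Pbar * Abar = -M := g1
      have e' : (r / c) • (Abarᵀ * Pbar) + Abarᵀ * Δ + ((r / c) • (Pbar * Abar) + Δ * Abar)
          = (r / c) • (Abarᵀ * Pbar + Pbar * Abar) + (Abarᵀ * Δ + Δ * Abar) := by
        rw [smul_add]; abel
      rw [e', e, keyΔ, smul_neg]
      abel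
    rw [hL]
    refine Matrix.PosSemidef.of_dotProduct_mulVec_nonneg ?_ ?_
    · apply herm_aux
      rw [Matrix.transpose_sub, Matrix.transpose_smul, tM, tR]
    · intro x
      rw [star_trivial, Matrix.sub_mulVec, dotProduct_sub,
        Matrix.smul_mulVec, dotProduct_smul, smul_eq_mul]
      have h1 := hMx x
      have h2 := (abs_le.mp (hRx x)).2
      have h3 : r / c * (c * (x ⬝ᵥ x)) ≤ r / c * (x ⬝ᵥ (M *ᵥ x)) :=
        mul_le_mul_of_nonneg_left h1 hrc0
      have h4 : r / c * (c * (x ⬝ᵥ x)) = r * (x ⬝ᵥ x) := by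
        field_simp
      linarith
  have psd_minus : ((r / c) • Pbar - Δ).PosSemidef := by
    have hYt : ((r / c) • Pbar - Δ)ᵀ = (r / c) • Pbar - Δ := by
      rw [Matrix.transpose_sub, Matrix.transpose_smul, tPbar, tΔ]
    refine psd_of_lyap Abar _ hAbar (herm_aux _ hYt) ?_
    have hL : -(Abarᵀ * ((r / c) • Pbar - Δ) + ((r / c) • Pbar - Δ) * Abar)
        = (r / c) • M + R := by
      rw [Matrix.mul_sub, Matrix.sub_mul, mul_smul_comm, smul_mul_assoc]
      have e' : (r / c) • (Abarᵀ * Pbar) - Abarᵀ * Δ + ((r / c) • (Pbar * Abar) - Δ * Abar)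
          = (r / c) • (Abarᵀ * Pbar + Pbar * Abar) - (Abarᵀ * Δ + Δ * Abar) := by
        rw [smul_add]; abel
      rw [e', g1, keyΔ, smul_neg]
      abel
    rw [hL]
    refine Matrix.PosSemidef.of_dotProduct_mulVec_nonneg ?_ ?_
    · apply herm_aux
      rw [Matrix.transpose_add, Matrix.transpose_smul, tM, tR]
    · intro x
      rw [star_trivial, Matrix.add_mulVec, dotProduct_add,
        Matrix.smul_mulVec, dotProduct_smul, smul_eq_mul]
      have h1 := hMx x
      have h2 := (abs_le.mp (hRx x)).1
      have h3 : r / c * (c * (x ⬝ᵥ x)) ≤ r / c * (x ⬝ᵥ (M *ᵥ x)) :=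
        mul_le_mul_of_nonneg_left h1 hrc0
      have h4 : r / c * (c * (x ⬝ᵥ x)) = r * (x ⬝ᵥ x) := by
        field_simp
      linarith
  -- combine
  have habs : ∀ x : Fin n → ℝ,
      |x ⬝ᵥ (Δ *ᵥ x)| ≤ (r / c * matrixSpectralNorm Pbar) * (x ⬝ᵥ x) := by
    intro x
    have hp := psd_plus.dotProduct_mulVec_nonneg x
    have hm := psd_minus.dotProduct_mulVec_nonneg x
    rw [star_trivial, Matrix.add_mulVec, dotProduct_add,
      Matrix.smul_mulVec, dotProduct_smul, smul_eq_mul] at hp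
    rw [star_trivial, Matrix.sub_mulVec, dotProduct_sub,
      Matrix.smul_mulVec, dotProduct_smul, smul_eq_mul] at hm
    have hPbarx : x ⬝ᵥ (Pbar *ᵥ x) ≤ matrixSpectralNorm Pbar * (x ⬝ᵥ x) :=
      le_trans (le_abs_self _) (abs_dot_le Pbar x)
    have h5 : r / c * (x ⬝ᵥ (Pbar *ᵥ x)) ≤ r / c * (matrixSpectralNorm Pbar * (x ⬝ᵥ x)) :=
      mul_le_mul_of_nonneg_left hPbarx hrc0
    rw [abs_le]
    constructor <;> [nlinarith; nlinarith]
  have hfinal : matrixSpectralNorm Δ ≤ r / c * matrixSpectralNorm Pbar := by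
    refine matrixSpectralNorm_le_of_quadform Δ tΔ ?_ habs
    have : (0 : ℝ) ≤ matrixSpectralNorm Pbar := norm_nonneg _
    positivity
  calc matrixSpectralNorm (Pbar - P) = matrixSpectralNorm Δ := by rw [hΔ]
    _ ≤ r / c * matrixSpectralNorm Pbar := hfinal
    _ = (2 / c) * matrixSpectralNorm Atil * matrixSpectralNorm P * matrixSpectralNorm Pbar := by
        rw [hr]; ring
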